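/- Let G be a signed graph with signed Laplacian L, let λ1(L) be the smallest eigenvalue of L with unit eigenvector v satisfying L v = λ1(L) v. For any vertex i with |v_i| < 1, let L^(i) be the signed Laplacian of the graph obtained by deleting vertex i and its incident edges. Then λ1(L^(i)) ≤ (λ1(L)(1 - 2 v_i^2) - Σ_{j ∈ N(i)} v_j^2 + v_i^2 d(i)) / (1 - v_i^2), where N(i) is the set of neighbours of i and d(i) its degree. -/

import Mathlib

open Matrix

structure SignedGraph (V : Type) [Fintype V] [DecidableEq V] where
  sign : V → V → ℝ
  symm : ∀ i j, sign i j = sign j i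
  loopless : ∀ i, sign i i = 0
  vals : ∀ i j, sign i j = 0 ∨ sign i j = 1 ∨ sign i j = -1

variable {V : Type} [Fintype V] [DecidableEq V]

/-- The signed adjacency matrix. -/
def SignedGraph.adj (G : SignedGraph V) : Matrix V V ℝ :=
  Matrix.of G.sign

/-- The degree of a vertex: number of incident edges of either sign. -/
def SignedGraph.deg (G : SignedGraph V) (i : V) : ℝ :=
  ∑ j, |G.sign i j|

/-- The signed Laplacian L = D - A. -/
def SignedGraph.lap (G : SignedGraph V) : Matrix V V ℝ :=
  Matrix.diagonal G.deg - G.adj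

/-- A signed graph is balanced if the vertices can be two-colored (±1) so that
every edge sign equals the product of its endpoint colors. -/
def SignedGraph.Balanced (G : SignedGraph V) : Prop :=
  ∃ x : V → ℝ, (∀ i, x i = 1 ∨ x i = -1) ∧
    ∀ i j, G.sign i j ≠ 0 → G.sign i j = x i * x j

/-- Connectivity of a signed graph. -/
def SignedGraph.Connected (G : SignedGraph V) : Prop :=
  ∀ i j : V, Relation.ReflTransGen (fun a b => G.sign a b ≠ 0) i j

/-- The induced signed subgraph on a vertex set. -/
def SignedGraph.induce (G : SignedGraph V) (S : Finset V) :
    SignedGraph {v // v ∈ S} where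
  sign a b := G.sign a.1 b.1
  symm a b := G.symm a.1 b.1
  loopless a := G.loopless a.1
  vals a b := G.vals a.1 b.1

/-- The underlying simple graph of a signed graph. -/
def SignedGraph.toSimpleGraph (G : SignedGraph V) : SimpleGraph V where
  Adj i j := G.sign i j ≠ 0
  symm := by
    constructor
    intro i j h
    rw [G.symm j i]
    exact h
  loopless := by
    constructor
    intro i h
    exact h (G.loopless i)

/-! Restricting the unit eigenvector `v` to `V ∖ {i}` gives a test vector `w` with
`‖w‖² = 1 - v_i²`. Expanding `wᵀ L⁽ⁱ⁾ w` in terms of `vᵀ L v = λ₁(L)` and the `i`-th row of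
`L v = λ₁(L) v` yields the numerator of the bound, and the Rayleigh inequality
`λ₁(L⁽ⁱ⁾) ‖w‖² ≤ wᵀ L⁽ⁱ⁾ w` finishes the proof. -/

open scoped ComplexOrder

theorem Matrix.IsHermitian.posSemidef_sub_smul_one {𝕜 n : Type*} [RCLike 𝕜] [Fintype n]
    [DecidableEq n] {A : Matrix n n 𝕜} (hA : A.IsHermitian) {c : ℝ}
    (hc : ∀ k, c ≤ hA.eigenvalues k) : (A - (c : 𝕜) • 1).PosSemidef := by
  have hD :
      (diagonal (RCLike.ofReal ∘ hA.eigenvalues) - (c : 𝕜) • (1 : Matrix n n 𝕜)).PosSemidef := by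
    rw [← diagonal_one, ← diagonal_smul, diagonal_sub, posSemidef_diagonal_iff]
    intro k
    simp only [Function.comp_apply, Pi.smul_apply, smul_eq_mul, mul_one, ← RCLike.ofReal_sub]
    exact RCLike.ofReal_nonneg.mpr (sub_nonneg.mpr (hc k))
  rw [hA.spectral_theorem, ← map_one (Unitary.conjStarAlgAut 𝕜 _ hA.eigenvectorUnitary),
    ← map_smul, ← map_sub, Unitary.conjStarAlgAut_apply]
  exact hD.mul_mul_conjTranspose_same _

theorem Matrix.IsHermitian.iInf_eigenvalues_mul_dotProduct_self_le {n : Type*} [Fintype n]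
    [DecidableEq n] {A : Matrix n n ℝ} (hA : A.IsHermitian) (x : n → ℝ) :
    (⨅ k, hA.eigenvalues k) * (x ⬝ᵥ x) ≤ x ⬝ᵥ (A *ᵥ x) := by
  -- for empty `n` the infimum is `sInf ∅ = 0` and both sides vanish
  cases isEmpty_or_nonempty n
  · simp [dotProduct]
  have hpsd := hA.posSemidef_sub_smul_one fun k => ciInf_le (Finite.bddBelow_range _) k
  simpa [sub_mulVec, smul_mulVec, dotProduct_smul, sub_nonneg] using
    hpsd.dotProduct_mulVec_nonneg x

theorem sum_subtype_compl_singleton {M : Type*} [AddCommGroup M] (i : V) (f : V → M) :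
    ∑ j : {j // j ∈ ({i}ᶜ : Finset V)}, f j = ∑ j, f j - f i := by
  rw [Finset.sum_coe_sort, Fintype.sum_eq_add_sum_compl i f, add_sub_cancel_left]

namespace SignedGraph

variable (G : SignedGraph V)

theorem lap_mulVec_apply (x : V → ℝ) (j : V) :
    (G.lap *ᵥ x) j = G.deg j * x j - ∑ k, G.sign j k * x k := by
  simp [lap, adj, mulVec, dotProduct, diagonal_apply, sub_mul, Finset.sum_sub_distrib]

theorem deg_induce_compl_singleton (i : V) (j : {j // j ∈ ({i}ᶜ : Finset V)}) :
    (G.induce {i}ᶜ).deg j = G.deg j - |G.sign j i| :=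
  sum_subtype_compl_singleton i (fun k => |G.sign j k|)

theorem dotProduct_lap_mulVec_induce_compl_singleton (i : V) (x : V → ℝ) :
    (fun j : {j // j ∈ ({i}ᶜ : Finset V)} => x j) ⬝ᵥ
        ((G.induce {i}ᶜ).lap *ᵥ fun j => x j) =
      x ⬝ᵥ (G.lap *ᵥ x) - G.deg i * x i ^ 2 - ∑ j, |G.sign i j| * x j ^ 2
        + 2 * x i * ∑ j, G.sign i j * x j := by
  have hrow (j : V) : ∑ k : {k // k ∈ ({i}ᶜ : Finset V)}, G.sign j k * x k =
      ∑ k, G.sign j k * x k - G.sign j i * x i :=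
    sum_subtype_compl_singleton i (fun k => G.sign j k * x k)
  simp only [dotProduct, lap_mulVec_apply, deg_induce_compl_singleton]
  simp only [induce, hrow]
  rw [sum_subtype_compl_singleton i (fun j => x j * ((G.deg j - |G.sign j i|) * x j
    - (∑ k, G.sign j k * x k - G.sign j i * x i)))]
  have hsplit : ∑ j, x j * ((G.deg j - |G.sign j i|) * x j
        - (∑ k, G.sign j k * x k - G.sign j i * x i)) =
      ∑ j, x j * (G.deg j * x j - ∑ k, G.sign j k * x k) - ∑ j, |G.sign i j| * x j ^ 2
        + x i * ∑ j, G.sign i j * x j := by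
    rw [Finset.mul_sum, ← Finset.sum_sub_distrib, ← Finset.sum_add_distrib]
    refine Finset.sum_congr rfl fun j _ => ?_
    rw [G.symm j i]
    ring
  rw [hsplit, G.loopless, abs_zero]
  ring

end SignedGraph

theorem stmt2 (G : SignedGraph V) (hL : G.lap.IsHermitian)
    (v : V → ℝ) (hunit : ∑ j, v j ^ 2 = 1)
    (heig : G.lap.mulVec v = (⨅ k, hL.eigenvalues k) • v)
    (i : V) (hvi : |v i| < 1)
    (hLi : (G.induce ({i}ᶜ : Finset V)).lap.IsHermitian) :
    (⨅ k, hLi.eigenvalues k) ≤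
      ((⨅ k, hL.eigenvalues k) * (1 - 2 * v i ^ 2)
          - (∑ j, |G.sign i j| * v j ^ 2) + v i ^ 2 * G.deg i) /
        (1 - v i ^ 2) := by
  set lam := ⨅ k, hL.eigenvalues k
  have hvv : v ⬝ᵥ v = 1 := by simpa only [dotProduct, sq] using hunit
  have hquad : v ⬝ᵥ (G.lap *ᵥ v) = lam := by rw [heig, dotProduct_smul, hvv, smul_eq_mul, mul_one]
  have hrow : ∑ j, G.sign i j * v j = (G.deg i - lam) * v i := by
    have := congrFun heig i
    rw [G.lap_mulVec_apply, Pi.smul_apply, smul_eq_mul] at this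
    linarith
  set w : {j // j ∈ ({i}ᶜ : Finset V)} → ℝ := fun j => v j
  have hww : w ⬝ᵥ w = 1 - v i ^ 2 := by
    rw [dotProduct, sum_subtype_compl_singleton i (fun j => v j * v j), ← dotProduct, hvv, sq]
  have hray := hLi.iInf_eigenvalues_mul_dotProduct_self_le w
  rw [hww, G.dotProduct_lap_mulVec_induce_compl_singleton, hquad, hrow] at hray
  rw [le_div_iff₀ (sub_pos.mpr ((sq_lt_one_iff_abs_lt_one _).mpr hvi))]
  linarith
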